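/- Let V have density proportional to exp(-a‖v‖_K) on ℝ^m for a norm ball K and a > 0. Then for each α ∈ (0,1), the α-concentration set of V is S^α_V = t·K, where t is the α-quantile of the Gamma(m, a) distribution. -/

import Mathlib

open MeasureTheory Pointwise Set

/-- A set `K ⊆ ℝ^m` is a *norm ball* if it is convex, bounded, absorbing and
symmetric about zero. -/
def IsNormBall {m : ℕ} (K : Set (Fin m → ℝ)) : Prop :=
  Convex ℝ K ∧ Bornology.IsBounded K ∧ Absorbent ℝ K ∧ ∀ u ∈ K, -u ∈ K

/-- `S` is an `α`-concentration set for the density `f`: a Lebesgue-smallest measurable set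
carrying probability at least `α` under the density `f`. -/
def IsConcSet {m : ℕ} (f : (Fin m → ℝ) → ℝ) (α : ℝ) (S : Set (Fin m → ℝ)) : Prop :=
  MeasurableSet S ∧ α ≤ ∫ x in S, f x ∧
    ∀ T : Set (Fin m → ℝ), MeasurableSet T → α ≤ (∫ x in T, f x) → volume S ≤ volume T

/-- CDF of the gamma distribution (removed from Mathlib; restored with its old definition). -/
noncomputable def ProbabilityTheory.gammaCDFReal (a r : ℝ) : StieltjesFunction ℝ :=
  ProbabilityTheory.cdf (ProbabilityTheory.gammaMeasure a r)

/-!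
In dimension `n`, Lebesgue measure pushed forward by the gauge `‖·‖_K` is
`vol K · n r^(n-1) dr` on `[0, ∞)`, because `{‖v‖_K ≤ r} = r • K` up to the null set
`r • frontier K`. Hence under the density `∝ exp(-a ‖v‖_K)` the gauge is `Gamma(n, a)`-distributed,
and `t • K` carries mass exactly `α` when `t` is the `α`-quantile, which exists because the Gamma
cdf is continuous. The density is a decreasing function of the gauge, so `t • K` is a superlevel
set of it; a superlevel set `{f ≥ c}` has the least volume among sets of at least its mass, since
trading `S \ T` for `T \ S` trades density `≥ c` for density `≤ c`.
-/

open Filter Topology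
open scoped ENNReal Nat

theorem MeasureTheory.Measure.ext_of_Iic_of_ne_top {μ ν : Measure ℝ} (hμ : ∀ t, μ (Iic t) ≠ ∞)
    (h : ∀ t, μ (Iic t) = ν (Iic t)) : μ = ν := by
  refine Measure.ext_of_Ioc' μ ν (fun a b _ => ?_) (fun a b hab => ?_)
  · exact ne_top_of_le_ne_top (hμ b) (measure_mono Ioc_subset_Iic_self)
  · have hsub : Iic a ⊆ Iic b := Iic_subset_Iic.2 hab.le
    rw [← Iic_sdiff_Iic, measure_sdiff hsub nullMeasurableSet_Iic (hμ a),
      measure_sdiff hsub nullMeasurableSet_Iic (h a ▸ hμ a), h a, h b]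

theorem MeasureTheory.measure_le_of_setIntegral_le {X : Type*} [MeasurableSpace X]
    {μ : Measure X} {f : X → ℝ} {S T : Set X} {c : ℝ} (hf : Integrable f μ) (hc : 0 < c)
    (hS : MeasurableSet S) (hT : MeasurableSet T) (hfS : ∀ x ∈ S, c ≤ f x)
    (hfSc : ∀ x ∉ S, f x ≤ c) (hST : ∫ x in S, f x ∂μ ≤ ∫ x in T, f x ∂μ) : μ S ≤ μ T := by
  rcases eq_top_or_lt_top (μ T) with hTtop | hTfin
  · exact hTtop ▸ le_top
  have hSfin : μ S < ∞ := (measure_mono fun x hx =>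
    ((hfS x hx).trans (le_abs_self _) : c ≤ ‖f x‖)).trans_lt (hf.measure_norm_ge_lt_top hc)
  have hST' : μ (S \ T) < ∞ := (measure_mono sdiff_subset).trans_lt hSfin
  have hTS' : μ (T \ S) < ∞ := (measure_mono sdiff_subset).trans_lt hTfin
  have hdiff : ∫ x in S \ T, f x ∂μ ≤ ∫ x in T \ S, f x ∂μ := by
    have hS' := integral_inter_add_sdiff hT hf.integrableOn (s := S)
    have hT' := integral_inter_add_sdiff hS hf.integrableOn (s := T)
    rw [inter_comm] at hT'
    linarith
  have hlow : c * μ.real (S \ T) ≤ ∫ x in S \ T, f x ∂μ :=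
    setIntegral_ge_of_const_le_real (hS.diff hT) hST'.ne (fun x hx => hfS x hx.1) hf.integrableOn
  have hupp : ∫ x in T \ S, f x ∂μ ≤ c * μ.real (T \ S) := by
    rw [mul_comm, ← smul_eq_mul, ← setIntegral_const]
    exact setIntegral_mono_on hf.integrableOn (integrableOn_const hTS'.ne) (hT.diff hS)
      fun x hx => hfSc x hx.2
  have hdiff_le : μ (S \ T) ≤ μ (T \ S) := by
    rw [← ENNReal.toReal_le_toReal hST'.ne hTS'.ne]
    exact le_of_mul_le_mul_left (hlow.trans (hdiff.trans hupp)) hc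
  calc μ S = μ (S ∩ T) + μ (S \ T) := (measure_inter_add_sdiff S hT).symm
    _ ≤ μ (T ∩ S) + μ (T \ S) := by rw [inter_comm]; gcongr
    _ = μ T := measure_inter_add_sdiff T hS

namespace ProbabilityTheory

theorem continuous_cdf (μ : Measure ℝ) [IsProbabilityMeasure μ] [NullSingletonClass μ] :
    Continuous (cdf μ) := by
  refine continuous_iff_continuousAt.2 fun x => ?_
  have hmono := monotone_cdf μ
  have hright : Function.rightLim (cdf μ) x = cdf μ x :=
    hmono.continuousWithinAt_Ioi_iff_rightLim_eq.1
      (((cdf μ).right_continuous x).mono Ioi_subset_Ici_self)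
  have hjump : ENNReal.ofReal (cdf μ x - Function.leftLim (cdf μ) x) = 0 := by
    rw [← StieltjesFunction.measure_singleton, measure_cdf, measure_singleton]
  rw [hmono.continuousAt_iff_leftLim_eq_rightLim, hright]
  exact le_antisymm (hmono.leftLim_le le_rfl) (sub_nonpos.1 (ENNReal.ofReal_eq_zero.1 hjump))

theorem exists_cdf_eq (μ : Measure ℝ) [IsProbabilityMeasure μ] [NullSingletonClass μ] {α : ℝ}
    (hα : α ∈ Ioo 0 1) : ∃ t, cdf μ t = α :=
  mem_range_of_exists_le_of_exists_ge (continuous_cdf μ)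
    ((tendsto_cdf_atBot μ).eventually (eventually_le_nhds hα.1)).exists
    ((tendsto_cdf_atTop μ).eventually (eventually_ge_nhds hα.2)).exists

theorem gammaCDFReal_zero {a r : ℝ} (ha : 0 < a) (hr : 0 < r) : gammaCDFReal a r 0 = 0 := by
  rw [gammaCDFReal, cdf_gammaMeasure_eq_lintegral ha hr, setLIntegral_congr Iio_ae_eq_Iic.symm,
    lintegral_gammaPDF_of_nonpos le_rfl, ENNReal.toReal_zero]

theorem exists_pos_gammaCDFReal_eq {a r : ℝ} (ha : 0 < a) (hr : 0 < r) {α : ℝ}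
    (hα : α ∈ Ioo 0 1) : ∃ t, 0 < t ∧ gammaCDFReal a r t = α := by
  have := isProbabilityMeasure_gammaMeasure ha hr
  have : NullSingletonClass (gammaMeasure a r) := by rw [gammaMeasure]; infer_instance
  obtain ⟨t, ht⟩ := exists_cdf_eq (gammaMeasure a r) hα
  refine ⟨t, lt_of_not_ge fun ht0 => hα.1.not_ge ?_, ht⟩
  rw [← ht, ← gammaCDFReal_zero ha hr]
  exact monotone_cdf _ ht0

end ProbabilityTheory

noncomputable def radialDensity (n : ℕ) : ℝ → ℝ≥0∞ :=
  (Ici 0).indicator fun u => ENNReal.ofReal (n * u ^ (n - 1))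

theorem measurable_radialDensity (n : ℕ) : Measurable (radialDensity n) :=
  (Measurable.ennreal_ofReal (by fun_prop)).indicator measurableSet_Ici

theorem lintegral_Iic_radialDensity {n : ℕ} (hn : 0 < n) (t : ℝ) :
    ∫⁻ u in Iic t, radialDensity n u = ENNReal.ofReal t ^ n := by
  rw [radialDensity, lintegral_indicator measurableSet_Ici,
    Measure.restrict_restrict measurableSet_Ici]
  rcases le_or_gt t 0 with ht | ht
  · have hnull : volume (Ici 0 ∩ Iic t) = 0 :=
      measure_mono_null (fun u hu => le_antisymm (hu.2.trans ht) hu.1) (measure_singleton 0)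
    rw [Measure.restrict_zero_set hnull, lintegral_zero_measure, ENNReal.ofReal_of_nonpos ht,
      zero_pow hn.ne']
  have hnonneg : ∀ᵐ u ∂volume.restrict (Icc 0 t), 0 ≤ (n : ℝ) * u ^ (n - 1) :=
    (ae_restrict_iff' measurableSet_Icc).2 (ae_of_all _ fun u hu => by have := hu.1; positivity)
  have hint : IntegrableOn (fun u : ℝ => (n : ℝ) * u ^ (n - 1)) (Icc 0 t) :=
    (by fun_prop : Continuous fun u : ℝ => (n : ℝ) * u ^ (n - 1)).integrableOn_Icc
  rw [Ici_inter_Iic, ← ofReal_integral_eq_lintegral_ofReal hint hnonneg,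
    integral_Icc_eq_integral_Ioc, ← intervalIntegral.integral_of_le ht.le,
    intervalIntegral.integral_const_mul, integral_pow, Nat.sub_add_cancel hn, Nat.cast_pred hn,
    sub_add_cancel, zero_pow hn.ne', sub_zero, mul_div_cancel₀ _ (by positivity),
    ENNReal.ofReal_pow ht.le]

theorem radialDensity_mul_exp {n : ℕ} (hn : 0 < n) {a : ℝ} (ha : 0 < a) (u : ℝ) :
    radialDensity n u * ENNReal.ofReal (Real.exp (-a * u)) =
      ENNReal.ofReal (n ! / a ^ n) * ProbabilityTheory.gammaPDF n a u := by
  rcases lt_or_ge u 0 with hu | hu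
  · rw [radialDensity, indicator_of_notMem (notMem_Ici.2 hu), zero_mul,
      ProbabilityTheory.gammaPDF_of_neg hu, mul_zero]
  rw [radialDensity, indicator_of_mem (mem_Ici.2 hu), ProbabilityTheory.gammaPDF_of_nonneg hu,
    ← ENNReal.ofReal_mul (by positivity), ← ENNReal.ofReal_mul (by positivity)]
  congr 1
  have hΓ : Real.Gamma n = (n - 1 : ℕ) ! := by
    rw [← Real.Gamma_nat_eq_factorial, Nat.cast_pred hn, sub_add_cancel]
  have hpow : u ^ ((n : ℝ) - 1) = u ^ (n - 1) := by
    rw [← Real.rpow_natCast, Nat.cast_pred hn]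
  rw [Real.rpow_natCast, hΓ, hpow, ← Nat.mul_factorial_pred hn.ne', Nat.cast_mul, neg_mul]
  field_simp

section Gauge

variable {E : Type*} [NormedAddCommGroup E] [NormedSpace ℝ E] {K : Set E}

theorem setOf_gauge_eq_smul_frontier (hc : Convex ℝ K) (h0 : K ∈ 𝓝 (0 : E)) {t : ℝ}
    (ht : 0 < t) : {v | gauge K v = t} = t • frontier K := by
  ext v
  rw [mem_smul_set_iff_inv_smul_mem₀ ht.ne', ← gauge_eq_one_iff_mem_frontier hc h0,
    gauge_smul_of_nonneg (inv_nonneg.2 ht.le), smul_eq_mul, inv_mul_eq_one₀ ht.ne', eq_comm,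
    mem_ofPred_eq]

variable [FiniteDimensional ℝ E]

theorem Convex.mem_nhds_zero_of_absorbent (hc : Convex ℝ K) (ha : Absorbent ℝ K) :
    K ∈ 𝓝 (0 : E) := by
  have hspan : affineSpan ℝ K = ⊤ := by
    refine AffineSubspace.affineSpan_eq_top_iff_vectorSpan_eq_top_of_nonempty ℝ _ _
      ⟨0, ha.zero_mem⟩ |>.2 (eq_top_iff.2 fun x _ => ?_)
    obtain ⟨r, -, hx⟩ := (ha x).exists_pos
    obtain ⟨k, hk, rfl⟩ := hx (max r 1) (by simp [abs_of_pos]) (mem_singleton x)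
    exact Submodule.smul_mem _ _ (Submodule.subset_span ⟨k, hk, 0, ha.zero_mem, by simp⟩)
  obtain ⟨x, hx⟩ := hc.interior_nonempty_iff_affineSpan_eq_top.2 hspan
  obtain ⟨r, hr, hrx⟩ := (ha (-x)).exists_pos
  obtain ⟨k, hk, hkx⟩ := hrx (r + 1) (by simp [abs_of_pos (by positivity : 0 < r + 1)])
    (mem_singleton _)
  -- `0` lies on the open segment from the interior point `x` to `k = -(r + 1)⁻¹ • x ∈ K`.
  have h0 : (r + 2)⁻¹ • x + ((r + 1) / (r + 2)) • k = 0 := by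
    rw [div_eq_inv_mul, mul_smul, show (r + 1) • k = -x from hkx, smul_neg, add_neg_cancel]
  rw [← mem_interior_iff_mem_nhds, ← h0]
  exact hc.combo_interior_self_mem_interior hx hk (by positivity) (by positivity)
    (by field_simp; ring)

variable [MeasurableSpace E] [BorelSpace E] (μ : Measure E) [μ.IsAddHaarMeasure]

theorem smul_ae_eq_setOf_gauge_le (hc : Convex ℝ K) (h0 : K ∈ 𝓝 (0 : E)) {t : ℝ} (ht : 0 < t) :
    (t • K : Set E) =ᵐ[μ] {v | gauge K v ≤ t} := by
  refine ae_eq_set.2 ⟨?_, measure_mono_null (fun v hv => ?_) (?_ : μ (t • frontier K) = 0)⟩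
  · exact measure_mono_null (fun v hv => (hv.2 (gauge_le_of_mem ht.le hv.1)).elim) measure_empty
  · rw [← setOf_gauge_eq_smul_frontier hc h0 ht]
    exact le_antisymm hv.1 (le_gauge_of_notMem (hc.starConvex (mem_of_mem_nhds h0))
      ((absorbent_nhds_zero h0) v) hv.2)
  · rw [Measure.addHaar_smul_of_nonneg μ ht.le, hc.addHaar_frontier μ, mul_zero]

variable [Nontrivial E]

theorem measure_setOf_gauge_le (hc : Convex ℝ K) (h0 : K ∈ 𝓝 (0 : E))
    (hb : Bornology.IsBounded K) (t : ℝ) :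
    μ {v | gauge K v ≤ t} = ENNReal.ofReal t ^ Module.finrank ℝ E * μ K := by
  rcases le_or_gt t 0 with ht | ht
  · have hsub : {v | gauge K v ≤ t} ⊆ {0} := fun v hv =>
      (gauge_eq_zero (absorbent_nhds_zero h0) ((NormedSpace.isVonNBounded_iff ℝ).2 hb)).1
        (le_antisymm (hv.trans ht) (gauge_nonneg v))
    rw [measure_mono_null hsub (measure_singleton 0), ENNReal.ofReal_of_nonpos ht,
      zero_pow Module.finrank_pos.ne', zero_mul]
  · rw [← measure_congr (smul_ae_eq_setOf_gauge_le μ hc h0 ht),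
      Measure.addHaar_smul_of_nonneg μ ht.le, ENNReal.ofReal_pow ht.le]

theorem map_gauge_addHaar (hc : Convex ℝ K) (h0 : K ∈ 𝓝 (0 : E)) (hb : Bornology.IsBounded K) :
    μ.map (gauge K) = μ K • volume.withDensity (radialDensity (Module.finrank ℝ E)) := by
  have hmap : ∀ t, μ.map (gauge K) (Iic t) = ENNReal.ofReal t ^ Module.finrank ℝ E * μ K :=
    fun t => by
      rw [Measure.map_apply (continuous_gauge hc h0).measurable measurableSet_Iic]
      exact measure_setOf_gauge_le μ hc h0 hb t
  refine Measure.ext_of_Iic_of_ne_top (fun t => ?_) (fun t => ?_)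
  · rw [hmap]
    exact ENNReal.mul_ne_top (ENNReal.pow_ne_top ENNReal.ofReal_ne_top) hb.measure_lt_top.ne
  · rw [hmap, Measure.smul_apply, withDensity_apply _ measurableSet_Iic,
      lintegral_Iic_radialDensity Module.finrank_pos, smul_eq_mul, mul_comm]

open ProbabilityTheory

variable {a : ℝ}

theorem map_gauge_withDensity_exp_neg_mul_gauge (hc : Convex ℝ K) (h0 : K ∈ 𝓝 (0 : E))
    (hb : Bornology.IsBounded K) (ha : 0 < a) :
    (μ.withDensity fun v => ENNReal.ofReal (Real.exp (-a * gauge K v))).map (gauge K) =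
      (μ K * ENNReal.ofReal ((Module.finrank ℝ E)! / a ^ Module.finrank ℝ E)) •
        gammaMeasure (Module.finrank ℝ E) a := by
  have hg : Measurable (gauge K) := (continuous_gauge hc h0).measurable
  have hexp : Measurable fun u : ℝ => ENNReal.ofReal (Real.exp (-a * u)) := by fun_prop
  have hpdf : Measurable (gammaPDF (Module.finrank ℝ E) a) :=
    (measurable_gammaPDFReal _ _).ennreal_ofReal
  ext s hs
  rw [Measure.map_apply hg hs, withDensity_apply _ (hg hs), ← setLIntegral_map hs hexp hg,
    map_gauge_addHaar μ hc h0 hb, Measure.restrict_smul, lintegral_smul_measure,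
    setLIntegral_withDensity_eq_setLIntegral_mul _ (measurable_radialDensity _) hexp hs]
  simp_rw [Pi.mul_apply, radialDensity_mul_exp Module.finrank_pos ha]
  rw [lintegral_const_mul _ hpdf, Measure.smul_apply, gammaMeasure, withDensity_apply _ hs,
    smul_eq_mul, smul_eq_mul, mul_assoc]

theorem integrable_exp_neg_mul_gauge (hc : Convex ℝ K) (h0 : K ∈ 𝓝 (0 : E))
    (hb : Bornology.IsBounded K) (ha : 0 < a) :
    Integrable (fun v => Real.exp (-a * gauge K v)) μ := by
  have hg : Measurable (gauge K) := (continuous_gauge hc h0).measurable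
  have := isProbabilityMeasure_gammaMeasure
    (Nat.cast_pos.2 (Module.finrank_pos (R := ℝ) (M := E))) ha
  refine ⟨by fun_prop, (hasFiniteIntegral_iff_ofReal
    (ae_of_all _ fun v => (Real.exp_pos _).le)).2 ?_⟩
  rw [← setLIntegral_univ, ← withDensity_apply _ MeasurableSet.univ,
    ← preimage_univ (f := gauge K), ← Measure.map_apply hg MeasurableSet.univ,
    map_gauge_withDensity_exp_neg_mul_gauge μ hc h0 hb ha, Measure.smul_apply, measure_univ,
    smul_eq_mul, mul_one]
  exact ENNReal.mul_lt_top hb.measure_lt_top ENNReal.ofReal_lt_top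

theorem setIntegral_preimage_gauge_exp_neg_mul_gauge (hc : Convex ℝ K) (h0 : K ∈ 𝓝 (0 : E))
    (hb : Bornology.IsBounded K) (ha : 0 < a) {s : Set ℝ} (hs : MeasurableSet s) :
    ∫ v in gauge K ⁻¹' s, Real.exp (-a * gauge K v) ∂μ =
      μ.real K * ((Module.finrank ℝ E)! / a ^ Module.finrank ℝ E) *
        (gammaMeasure (Module.finrank ℝ E) a).real s := by
  have hg : Measurable (gauge K) := (continuous_gauge hc h0).measurable
  rw [integral_eq_lintegral_of_nonneg_ae (ae_of_all _ fun v => (Real.exp_pos _).le)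
      (by fun_prop), ← withDensity_apply _ (hg hs), ← Measure.map_apply hg hs,
    map_gauge_withDensity_exp_neg_mul_gauge μ hc h0 hb ha, Measure.smul_apply, smul_eq_mul,
    ENNReal.toReal_mul, ENNReal.toReal_mul, ENNReal.toReal_ofReal (by positivity)]
  rfl

theorem setIntegral_smul_div_integral_exp_neg_mul_gauge (hc : Convex ℝ K) (h0 : K ∈ 𝓝 (0 : E))
    (hb : Bornology.IsBounded K) (ha : 0 < a) {t : ℝ} (ht : 0 < t) :
    (∫ v in t • K, Real.exp (-a * gauge K v) ∂μ) / ∫ v, Real.exp (-a * gauge K v) ∂μ =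
      gammaCDFReal (Module.finrank ℝ E) a t := by
  have := isProbabilityMeasure_gammaMeasure
    (Nat.cast_pos.2 (Module.finrank_pos (R := ℝ) (M := E))) ha
  have hK : 0 < μ.real K :=
    ENNReal.toReal_pos (μ.measure_pos_of_mem_nhds h0).ne' hb.measure_lt_top.ne
  have htot := setIntegral_preimage_gauge_exp_neg_mul_gauge μ hc h0 hb ha MeasurableSet.univ
  rw [preimage_univ, setIntegral_univ, probReal_univ, mul_one] at htot
  rw [setIntegral_congr_set (smul_ae_eq_setOf_gauge_le μ hc h0 ht),
    show {v | gauge K v ≤ t} = gauge K ⁻¹' Iic t from rfl,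
    setIntegral_preimage_gauge_exp_neg_mul_gauge μ hc h0 hb ha measurableSet_Iic, htot,
    mul_div_cancel_left₀ _ (by positivity), gammaCDFReal, cdf_eq_real]

end Gauge

/-- concentration sets of the $K$-norm mechanism: if `V` has density
proportional to `exp(-a‖v‖_K)`, then for each `α ∈ (0,1)` the `α`-concentration set of `V`
is `t ⋅ K`, where `t` is the `α`-quantile of `Gamma(m, a)`. -/
theorem concSet_of_K_mech {m : ℕ} (hm : 0 < m) (K : Set (Fin m → ℝ))
    (hK : IsNormBall K) (hKmeas : MeasurableSet K) (a : ℝ) (ha : 0 < a)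
    (f : (Fin m → ℝ) → ℝ)
    (hf : f = fun v => Real.exp (-a * gauge K v) /
      ∫ w : Fin m → ℝ, Real.exp (-a * gauge K w)) :
    ∀ α ∈ Ioo (0 : ℝ) 1, ∃ t : ℝ, 0 < t ∧
      ProbabilityTheory.gammaCDFReal m a t = α ∧ IsConcSet f α (t • K) := by
  subst hf
  obtain ⟨hc, hb, habs, -⟩ := hK
  have h0 := hc.mem_nhds_zero_of_absorbent habs
  have : Nonempty (Fin m) := ⟨⟨0, hm⟩⟩
  intro α hα
  obtain ⟨t, ht, hcdf⟩ := ProbabilityTheory.exists_pos_gammaCDFReal_eq (Nat.cast_pos.2 hm) ha hα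
  have hint := integrable_exp_neg_mul_gauge volume hc h0 hb ha
  have hmass : ∫ v in t • K, Real.exp (-a * gauge K v) / ∫ w, Real.exp (-a * gauge K w) = α := by
    rw [integral_div, setIntegral_smul_div_integral_exp_neg_mul_gauge volume hc h0 hb ha ht,
      Module.finrank_fin_fun, hcdf]
  have hmeas : MeasurableSet (t • K) := hKmeas.const_smul₀ t
  refine ⟨t, ht, hcdf, hmeas, hmass.ge, fun T hT hTα =>
    measure_le_of_setIntegral_le (hint.div_const _) (c := Real.exp (-a * t) / _)
      (div_pos (Real.exp_pos _) (integral_exp_pos hint)) hmeas hT (fun v hv => ?_)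
      (fun v hv => ?_) (hmass.trans_le hTα)⟩
  · have hv' : gauge K v ≤ t := gauge_le_of_mem ht.le hv
    gcongr Real.exp ?_ / _
    nlinarith
  · have hv' : t ≤ gauge K v := le_gauge_of_notMem (hc.starConvex habs.zero_mem) (habs v) hv
    gcongr Real.exp ?_ / _
    nlinarith
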